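/- Define γ(n) = Σ_{k=0}^n [n choose k]_q q^{k²}/(−q;q)_k. Then for every nonnegative integer n: Σ_{k=0}^n q^{k²} γ(k) / ((q;q)_k (q;q)_{n−k}) = Σ_{k=−n}^n (−1)^k q^{3k²} / ((q;q)_{n−k} (q;q)_{n+k}). -/

import Mathlib

open Finset

noncomputable def qp (x q : ℂ) (n : ℕ) : ℂ := ∏ j ∈ Finset.range n, (1 - x * q ^ j)

noncomputable def qpinf (x q : ℂ) : ℂ := ∏' j : ℕ, (1 - x * q ^ j)

noncomputable def qbinom (q : ℂ) (n k : ℕ) : ℂ := qp q q n / (qp q q k * qp q q (n - k))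

noncomputable def RS (a b q : ℂ) (n : ℕ) : ℂ :=
  ∑ k ∈ Finset.range (n + 1), qbinom q n k * a ^ k * b ^ (n - k)

noncomputable def Tsum (q : ℂ) (r n s : ℕ) : ℂ :=
  ∑ k ∈ Finset.range (n + 1),
    qp (q ^ (-(2 * (n : ℤ)))) (q ^ 2) k / (qp q q k * qp (q ^ ((1 : ℤ) + r - n)) q k)
      * q ^ ((2 - (s : ℤ)) * k)

noncomputable def gam (q : ℂ) (n : ℕ) : ℂ :=
  ∑ k ∈ Finset.range (n + 1), qbinom q n k * q ^ (k ^ 2) / qp (-q) q k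

/-!
The sums `β_n = ∑_{|r| ≤ n} α_r / ((q;q)_{n-r} (q;q)_{n+r})` are the Bailey pairs relative to
`a = 1`, and Bailey's lemma with both parameters sent to infinity turns `(α_r, β_n)` into
`(q^{r²} α_r, ∑_j q^{j²} β_j / (q;q)_{n-j})`; its input is a terminating q-Chu–Vandermonde sum.
Gauss's identity says that `α_r = (-1)^r q^{r²}` gives `β_n = 1 / (q²;q²)_n`. As
`(q;q)_j (-q;q)_j = (q²;q²)_j`, `γ(k) / (q;q)_k` is the `β_k` of the transformed pair, and one more
application of Bailey's lemma gives the pair with `α_r = (-1)^r q^{3r²}`, whose `β_n` is the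
right-hand side.
-/

lemma sum_Icc_comp_add_one_of_eq_zero {M : Type*} [AddCommMonoid M] (f : ℤ → M) {a b : ℤ}
    (hab : a ≤ b + 1) (ha : f a = 0) (hb : f (b + 1) = 0) :
    ∑ r ∈ Icc a b, f (r + 1) = ∑ r ∈ Icc a b, f r := by
  have hshift : ∑ r ∈ Icc a b, f (r + 1) = ∑ r ∈ Icc (a + 1) (b + 1), f r :=
    sum_nbij' (· + 1) (· - 1) (by simp) (by simp) (by simp) (by simp) (by simp)
  rw [hshift, Icc_add_one_left_eq_Ioc, ← zero_add (∑ r ∈ Ioc a _, f r), ← ha,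
    add_sum_Ioc_eq_sum_Icc hab, ← sum_Ico_add_eq_sum_Icc hab, hb, add_zero,
    Ico_add_one_right_eq_Icc]

@[simp] lemma qp_zero (x q : ℂ) : qp x q 0 = 1 := prod_range_zero _

lemma qp_succ (x q : ℂ) (n : ℕ) : qp x q (n + 1) = qp x q n * (1 - x * q ^ n) :=
  prod_range_succ _ _

lemma qp_add (x q : ℂ) (a b : ℕ) : qp x q (a + b) = qp x q a * qp (x * q ^ a) q b := by
  simp only [qp, prod_range_add, mul_assoc, ← pow_add]

lemma qp_succ' (x q : ℂ) (n : ℕ) : qp x q (n + 1) = (1 - x) * qp (x * q) q n := by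
  rw [add_comm, qp_add, pow_one, qp, prod_range_one, pow_zero, mul_one]

lemma qp_ne_zero {x y : ℂ} (hx : ‖x‖ < 1) (hy : ‖y‖ ≤ 1) (n : ℕ) : qp x y n ≠ 0 := by
  refine prod_ne_zero_iff.2 fun j _ h => ?_
  have : ‖x * y ^ j‖ < 1 := by
    rw [norm_mul, norm_pow]
    exact mul_lt_one_of_nonneg_of_lt_one_left (norm_nonneg x) hx (pow_le_one₀ (norm_nonneg y) hy)
  rw [← sub_eq_zero.mp h] at this
  simp at this

lemma qp_mul_qp_neg (q : ℂ) (n : ℕ) : qp q q n * qp (-q) q n = qp (q ^ 2) (q ^ 2) n := by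
  simp only [qp, ← prod_mul_distrib]
  exact prod_congr rfl fun j _ => by ring

section
variable {q : ℂ} (hP : ∀ n, qp q q n ≠ 0)
include hP

lemma one_sub_pow_succ_ne_zero (n : ℕ) : 1 - q ^ (n + 1) ≠ 0 := by
  have := hP (n + 1)
  rw [qp_succ, ← pow_succ'] at this
  exact right_ne_zero_of_mul this

lemma qp_sq_ne_zero (n : ℕ) : qp (q ^ 2) (q ^ 2) n ≠ 0 :=
  prod_ne_zero_iff.2 fun j _ => by
    convert one_sub_pow_succ_ne_zero hP (2 * j + 1) using 2
    ring

end

/-- `1 / (q;q)_k`, and `0` for `k < 0`: with this convention Pascal's rule needs no boundary cases,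
and the sums below may run over any large enough window. -/
noncomputable def qpInv (q : ℂ) (k : ℤ) : ℂ := if 0 ≤ k then (qp q q k.toNat)⁻¹ else 0

section qpInv
variable {q : ℂ}

lemma qpInv_of_nonneg {k : ℤ} (hk : 0 ≤ k) : qpInv q k = (qp q q k.toNat)⁻¹ := if_pos hk

lemma qpInv_of_neg {k : ℤ} (hk : k < 0) : qpInv q k = 0 := if_neg hk.not_ge

@[simp] lemma qpInv_natCast (n : ℕ) : qpInv q n = (qp q q n)⁻¹ := by
  simp [qpInv_of_nonneg]

@[simp] lemma qpInv_zero : qpInv q 0 = 1 := by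
  simp [qpInv_of_nonneg]

lemma qpInv_sub_mul_qpInv_add_eq_zero {n r : ℤ} (h : r ∉ Icc (-n) n) :
    qpInv q (n - r) * qpInv q (n + r) = 0 := by
  rw [mem_Icc, not_and_or, not_le, not_le] at h
  rcases h with h | h
  · rw [qpInv_of_neg (k := n + r) (by omega), mul_zero]
  · rw [qpInv_of_neg (by omega), zero_mul]

variable (hP : ∀ n, qp q q n ≠ 0)
include hP

lemma one_sub_zpow_mul_qpInv (k : ℤ) : (1 - q ^ k) * qpInv q k = qpInv q (k - 1) := by
  obtain ⟨n, rfl | rfl⟩ := Int.eq_nat_or_neg k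
  · cases n with
    | zero => simp [qpInv_of_neg]
    | succ n =>
      have := one_sub_pow_succ_ne_zero hP n
      rw [Nat.cast_succ, add_sub_cancel_right, ← Nat.cast_succ, qpInv_natCast, qpInv_natCast,
        qp_succ, ← pow_succ', zpow_natCast]
      field_simp [hP n]
  · rcases n.eq_zero_or_pos with rfl | hn
    · simp [qpInv_of_neg]
    · rw [qpInv_of_neg (by omega), qpInv_of_neg (by omega), mul_zero]

/-- Pascal's rule for `[a + b, a]_q = (q;q)_{a+b} / ((q;q)_a (q;q)_b)`. -/
lemma one_sub_zpow_add_mul_qpInv_mul_qpInv (hq0 : q ≠ 0) (a b : ℤ) :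
    (1 - q ^ (a + b)) * (qpInv q a * qpInv q b)
      = qpInv q (a - 1) * qpInv q b + q ^ a * (qpInv q a * qpInv q (b - 1)) := by
  rw [← one_sub_zpow_mul_qpInv hP a, ← one_sub_zpow_mul_qpInv hP b, zpow_add₀ hq0]
  ring

lemma qpInv_eq_qp_mul_qpInv_add (k m : ℕ) :
    qpInv q k = qp (q * q ^ k) q m * qpInv q ↑(k + m) := by
  have h := hP (k + m)
  rw [qp_add] at h
  rw [qpInv_natCast, qpInv_natCast, qp_add, mul_inv, mul_left_comm,
    mul_inv_cancel₀ (right_ne_zero_of_mul h), mul_one]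

end qpInv

noncomputable def baileyBeta (q : ℂ) (α : ℤ → ℂ) (n : ℕ) : ℂ :=
  ∑ r ∈ Icc (-(n : ℤ)) n, α r * (qpInv q (n - r) * qpInv q (n + r))

lemma baileyBeta_eq_sum_Icc {q : ℂ} (α : ℤ → ℂ) {n N : ℕ} (h : n ≤ N) :
    baileyBeta q α n = ∑ r ∈ Icc (-(N : ℤ)) N, α r * (qpInv q (n - r) * qpInv q (n + r)) :=
  sum_subset (Icc_subset_Icc (by omega) (by omega)) fun _ _ hr => by
    rw [qpInv_sub_mul_qpInv_add_eq_zero hr, mul_zero]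

section bailey
variable {q : ℂ} (hq0 : q ≠ 0) (hP : ∀ n, qp q q n ≠ 0)
include hq0 hP

/-- A terminating case of the q-Chu–Vandermonde sum: the q-analogue of
`∑ i, (N choose i) b^i (1 - b)^(N - i) = 1`. -/
theorem sum_qChuVandermonde (N : ℕ) (b : ℂ) :
    ∑ i ∈ range (N + 1),
        q ^ (i ^ 2) * b ^ i * qp (b * q ^ (i + 1)) q (N - i) * (qpInv q i * qpInv q (N - i))
      = qpInv q N := by
  induction N generalizing b with
  | zero => simp
  | succ N ih =>
    -- Pascal's rule splits the sum for `N + 1` in two, which recombine termwise into the sum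
    -- for `N` at `b * q`.
    set c : ℕ → ℂ := fun i => q ^ (i ^ 2) * b ^ i * qp (b * q ^ (i + 1)) q (N + 1 - i)
    have hc : ∀ i ∈ range (N + 1), c (i + 1) + c i * q ^ i
        = q ^ (i ^ 2) * (b * q) ^ i * qp (b * q * q ^ (i + 1)) q (N - i) := by
      intro i hi
      have hiN : N + 1 - i = N - i + 1 := by have := mem_range.mp hi; omega
      simp only [c, hiN, Nat.add_sub_add_right, qp_succ']
      rw [show b * q ^ (i + 1 + 1) = b * q * q ^ (i + 1) by ring,
        show b * q ^ (i + 1) * q = b * q * q ^ (i + 1) by ring]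
      ring
    apply mul_left_cancel₀ (one_sub_pow_succ_ne_zero hP N)
    rw [← zpow_natCast, Nat.cast_succ, one_sub_zpow_mul_qpInv hP, add_sub_cancel_right,
      ← ih (b * q), mul_sum]
    calc ∑ i ∈ range (N + 1 + 1),
          (1 - q ^ ((N : ℤ) + 1)) * (c i * (qpInv q i * qpInv q (↑(N + 1) - i)))
        = ∑ i ∈ range (N + 1 + 1), (c i * (qpInv q (i - 1) * qpInv q (N + 1 - i))
            + c i * q ^ i * (qpInv q i * qpInv q (N - i))) := by
          refine sum_congr rfl fun i _ => ?_
          have := one_sub_zpow_add_mul_qpInv_mul_qpInv hP hq0 i (N + 1 - i)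
          simp only [add_sub_cancel, zpow_natCast, show (N : ℤ) + 1 - i - 1 = N - i by ring] at this
          push_cast
          linear_combination c i * this
      _ = ∑ i ∈ range (N + 1), (c (i + 1) + c i * q ^ i) * (qpInv q i * qpInv q (N - i)) := by
          rw [sum_add_distrib, sum_range_succ', sum_range_succ _ (N + 1)]
          push_cast
          simp only [sub_add_cancel_left, qpInv_of_neg (by norm_num : (-1 : ℤ) < 0), mul_zero,
            zero_mul, add_zero, add_sub_cancel_right, add_sub_add_right_eq_sub, add_mul]
          rw [sum_add_distrib]
      _ = _ := sum_congr rfl fun i hi => by rw [hc i hi]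

/-- For `s ≤ n`, substituting `j = s + i` turns this into `sum_qChuVandermonde` at `b = q^(2s)`. -/
theorem sum_range_pow_sq_mul_qpInv (s n : ℕ) :
    ∑ j ∈ range (n + 1), q ^ (j ^ 2) * (qpInv q (n - j) * (qpInv q (j - s) * qpInv q (j + s)))
      = q ^ (s ^ 2) * (qpInv q (n - s) * qpInv q (n + s)) := by
  have hvanish : ∀ j < s, qpInv q (j - s) = 0 := fun j hj => qpInv_of_neg (by omega)
  rcases lt_or_ge n s with hns | hsn
  · rw [qpInv_of_neg (by omega), zero_mul, mul_zero]
    exact sum_eq_zero fun j hj => by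
      rw [hvanish j (by have := mem_range.mp hj; omega), zero_mul, mul_zero, mul_zero]
  obtain ⟨N, rfl⟩ := Nat.exists_eq_add_of_le hsn
  rw [add_assoc, sum_range_add, sum_eq_zero (s := range s) fun j hj => by
      rw [hvanish j (mem_range.mp hj), zero_mul, mul_zero, mul_zero], zero_add]
  push_cast
  rw [show (s : ℤ) + N - s = N by ring, ← sum_qChuVandermonde hq0 hP N (q ^ (2 * s)),
    sum_mul, mul_sum]
  refine sum_congr rfl fun i hi => ?_
  have hiN : i ≤ N := Nat.lt_succ_iff.mp (mem_range.mp hi)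
  have hsplit := qpInv_eq_qp_mul_qpInv_add (q := q) hP (2 * s + i) (N - i)
  rw [show 2 * s + i + (N - i) = 2 * s + N by omega] at hsplit
  push_cast at hsplit
  rw [show (s : ℤ) + N - (s + i) = N - i by ring, show (s : ℤ) + i - s = i by ring,
    show (s : ℤ) + i + s = 2 * s + i by ring, show (s : ℤ) + N + s = 2 * s + N by ring, hsplit,
    show q * q ^ (2 * s + i) = q ^ (2 * s) * q ^ (i + 1) by ring]
  ring

theorem sum_range_zpow_sq_mul_qpInv (r : ℤ) (n : ℕ) :
    ∑ j ∈ range (n + 1), q ^ (j ^ 2) * (qpInv q (n - j) * (qpInv q (j - r) * qpInv q (j + r)))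
      = q ^ (r ^ 2) * (qpInv q (n - r) * qpInv q (n + r)) := by
  obtain ⟨s, rfl | rfl⟩ := Int.eq_nat_or_neg r
  · rw [sum_range_pow_sq_mul_qpInv hq0 hP, ← Nat.cast_pow, zpow_natCast]
  · simp only [sub_neg_eq_add, ← sub_eq_add_neg, neg_sq]
    rw [← Nat.cast_pow, zpow_natCast, mul_comm (qpInv q (n + s)),
      ← sum_range_pow_sq_mul_qpInv hq0 hP]
    exact sum_congr rfl fun j _ => by rw [mul_comm (qpInv q (j + s))]

/-- Bailey's lemma, in the limit where both of its free parameters tend to infinity. -/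
theorem sum_pow_sq_mul_baileyBeta (α : ℤ → ℂ) (n : ℕ) :
    ∑ j ∈ range (n + 1), q ^ (j ^ 2) * baileyBeta q α j / qp q q (n - j)
      = baileyBeta q (fun r => q ^ (r ^ 2) * α r) n := by
  calc ∑ j ∈ range (n + 1), q ^ (j ^ 2) * baileyBeta q α j / qp q q (n - j)
      = ∑ j ∈ range (n + 1), ∑ r ∈ Icc (-(n : ℤ)) n,
          α r * (q ^ (j ^ 2) * (qpInv q (n - j) * (qpInv q (j - r) * qpInv q (j + r)))) := by
        refine sum_congr rfl fun j hj => ?_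
        have hjn : j ≤ n := Nat.lt_succ_iff.mp (mem_range.mp hj)
        rw [baileyBeta_eq_sum_Icc α hjn, div_eq_mul_inv, ← qpInv_natCast, Nat.cast_sub hjn,
          mul_sum, sum_mul]
        exact sum_congr rfl fun r _ => by ring
    _ = baileyBeta q (fun r => q ^ (r ^ 2) * α r) n := by
        rw [sum_comm, baileyBeta]
        refine sum_congr rfl fun r _ => ?_
        rw [← mul_sum, sum_range_zpow_sq_mul_qpInv hq0 hP]
        ring

/-- Pascal's rule at `(m + 1 - r, m + 1 + r)` splits each term in two; after the shift `r ↦ r + 1`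
the second half recombines with the first through `(1 - q^(m+1+r)) / (q;q)_{m+1+r}`. -/
theorem one_sub_pow_mul_baileyBeta_gauss (m : ℕ) :
    (1 - q ^ (2 * m + 2)) * baileyBeta q (fun r => (-1) ^ r * q ^ (r ^ 2)) (m + 1)
      = baileyBeta q (fun r => (-1) ^ r * q ^ (r ^ 2)) m := by
  set α : ℤ → ℂ := fun r => (-1) ^ r * q ^ (r ^ 2)
  set A : ℤ → ℂ := fun r => α r * (qpInv q (m - r) * qpInv q (m + 1 + r))
  set B : ℤ → ℂ := fun r => α r * q ^ ((m : ℤ) + 1 - r) * (qpInv q (m + 1 - r) * qpInv q (m + r))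
  have hpascal : ∀ r, (1 - q ^ (2 * m + 2)) * (α r * (qpInv q (m + 1 - r) * qpInv q (m + 1 + r)))
      = A r + B r := fun r => by
    have := one_sub_zpow_add_mul_qpInv_mul_qpInv hP hq0 (m + 1 - r) (m + 1 + r)
    rw [show (m : ℤ) + 1 - r + (m + 1 + r) = ((2 * m + 2 : ℕ) : ℤ) by push_cast; ring,
      zpow_natCast, show (m : ℤ) + 1 - r - 1 = m - r by ring,
      show (m : ℤ) + 1 + r - 1 = m + r by ring] at this
    linear_combination α r * this
  have hB : ∀ r, A r + B (r + 1) = α r * (qpInv q (m - r) * qpInv q (m + r)) := fun r => by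
    have hα : α (r + 1) * q ^ ((m : ℤ) + 1 - (r + 1)) = -(α r * q ^ ((m : ℤ) + 1 + r)) := by
      simp only [α, zpow_add_one₀ (by norm_num : (-1 : ℂ) ≠ 0), mul_assoc, ← zpow_add₀ hq0]
      ring_nf
    have h := one_sub_zpow_mul_qpInv hP (m + 1 + r)
    rw [show (m : ℤ) + 1 + r - 1 = m + r by ring] at h
    show α r * (qpInv q (m - r) * qpInv q (m + 1 + r)) + α (r + 1) * q ^ ((m : ℤ) + 1 - (r + 1))
      * (qpInv q (m + 1 - (r + 1)) * qpInv q (m + (r + 1))) = _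
    rw [hα, show (m : ℤ) + 1 - (r + 1) = m - r by ring, show (m : ℤ) + (r + 1) = m + 1 + r by ring,
      ← h]
    ring
  rw [baileyBeta_eq_sum_Icc α (N := m + 2) (by omega),
    baileyBeta_eq_sum_Icc α (n := m) (N := m + 2) (by omega),
    mul_sum]
  push_cast
  rw [sum_congr rfl fun r _ => hpascal r, sum_add_distrib,
    ← sum_Icc_comp_add_one_of_eq_zero B (by omega) ?_ ?_, ← sum_add_distrib]
  · exact sum_congr rfl fun r _ => hB r
  · exact mul_eq_zero_of_right _ (mul_eq_zero_of_right _ (qpInv_of_neg (by omega)))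
  · exact mul_eq_zero_of_right _ (mul_eq_zero_of_left (qpInv_of_neg (by omega)) _)

theorem baileyBeta_gauss (m : ℕ) :
    baileyBeta q (fun r => (-1) ^ r * q ^ (r ^ 2)) m = (qp (q ^ 2) (q ^ 2) m)⁻¹ := by
  induction m with
  | zero => simp [baileyBeta]
  | succ m ih =>
    have h := one_sub_pow_succ_ne_zero hP (2 * m + 1)
    rw [qp_succ, mul_inv, ← ih, ← one_sub_pow_mul_baileyBeta_gauss hq0 hP m,
      show q ^ 2 * (q ^ 2) ^ m = q ^ (2 * m + 1 + 1) by ring]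
    field_simp

theorem gam_div_qp (k : ℕ) :
    gam q k / qp q q k = baileyBeta q (fun r => q ^ (r ^ 2) * ((-1) ^ r * q ^ (r ^ 2))) k := by
  rw [← sum_pow_sq_mul_baileyBeta hq0 hP, gam, sum_div]
  refine sum_congr rfl fun j hj => ?_
  have hneg : qp (-q) q j ≠ 0 := by
    have := qp_sq_ne_zero hP j
    rw [← qp_mul_qp_neg] at this
    exact right_ne_zero_of_mul this
  rw [baileyBeta_gauss hq0 hP, qbinom, ← qp_mul_qp_neg]
  field_simp [hP k, hP j, hP (k - j)]

end bailey

theorem stmt15 (q : ℂ) (hq0 : q ≠ 0) (hq : ‖q‖ < 1) (n : ℕ) :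
    ∑ k ∈ Finset.range (n + 1), q ^ (k ^ 2) * gam q k / (qp q q k * qp q q (n - k))
      = ∑ k ∈ Finset.Icc (-(n : ℤ)) (n : ℤ),
          (-1 : ℂ) ^ k * q ^ (3 * k ^ 2)
            / (qp q q ((n : ℤ) - k).toNat * qp q q ((n : ℤ) + k).toNat) := by
  have hP : ∀ m, qp q q m ≠ 0 := qp_ne_zero hq hq.le
  calc ∑ k ∈ range (n + 1), q ^ (k ^ 2) * gam q k / (qp q q k * qp q q (n - k))
      = ∑ k ∈ range (n + 1), q ^ (k ^ 2) * (gam q k / qp q q k) / qp q q (n - k) :=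
        sum_congr rfl fun k _ => by ring
    _ = baileyBeta q (fun r => q ^ (r ^ 2) * (q ^ (r ^ 2) * ((-1) ^ r * q ^ (r ^ 2)))) n := by
        simp_rw [gam_div_qp hq0 hP, sum_pow_sq_mul_baileyBeta hq0 hP]
    _ = _ := sum_congr rfl fun k hk => by
        rw [mem_Icc] at hk
        rw [qpInv_of_nonneg (by omega), qpInv_of_nonneg (by omega), ← mul_inv, ← div_eq_mul_inv,
          show (3 : ℤ) * k ^ 2 = k ^ 2 + (k ^ 2 + k ^ 2) by ring, zpow_add₀ hq0, zpow_add₀ hq0]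
        ring
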